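/- arXiv:1206.3618 — 2 statements merged into one kernel-verified Lean document; each statement's English description precedes it below -/
import Mathlib

section
/- Let X and A be finite nonempty alphabets with A ⊆ X, let n ≥ 1, and let x_{1:n} ∈ A^n. Then −log₂ ξ(x_{1:n}) ≤ log₂ n + |A|·log₂ |X| − log₂ ρ_A(x_{1:n}), where ξ is the Sparse Sequential Dirichlet distribution over X and ρ_A is the Sequential Dirichlet estimator over A. -/
open Finset

/-- `cnt x i` is the number of occurrences of the symbol `x i` among `x 1, …, x (i-1)`,
i.e. the count `c(x_{1:i})` from the paper. -/
def cnt {σ : Type*} [DecidableEq σ] (x : ℕ → σ) (i : ℕ) : ℕ :=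
  ((Finset.Ico 1 i).filter (fun j => x j = x i)).card

/-- `seen x i` is the set `U(x_{<i})` of distinct symbols occurring in `x 1, …, x (i-1)`. -/
def seen {σ : Type*} [DecidableEq σ] (x : ℕ → σ) (i : ℕ) : Finset σ :=
  (Finset.Ico 1 i).image x

/-- The Sequential Dirichlet (Krichevsky–Trofimov) estimator over the alphabet `A`:
`ρ_A(x_{1:n}) = ∏_{i=1}^n (c(x_{1:i}) + 1/2) / (i + |A|/2 - 1)`. -/
noncomputable def rho {σ : Type*} [DecidableEq σ] (A : Finset σ) (x : ℕ → σ) (n : ℕ) : ℝ :=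
  ∏ i ∈ Finset.Icc 1 n, ((cnt x i : ℝ) + 1/2) / ((i : ℝ) + (A.card : ℝ)/2 - 1)

/-- The Sparse Sequential Dirichlet distribution over the alphabet `Xs`:
`ξ(x_{1:n}) = ∏_{i=1}^n f_i` where `f_i = (1/i)·(1/(|X| - |U(x_{<i})|))` if `c(x_{1:i}) = 0`
and `f_i = (1 - 1/i)·(c(x_{1:i}) + 1/2)/(i + |U(x_{<i})|/2 - 1)` otherwise. -/
noncomputable def xi {σ : Type*} [DecidableEq σ] (Xs : Finset σ) (x : ℕ → σ) (n : ℕ) : ℝ :=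
  ∏ i ∈ Finset.Icc 1 n,
    if cnt x i = 0 then
      (1/(i:ℝ)) * (1/((Xs.card : ℝ) - ((seen x i).card : ℝ)))
    else
      (1 - 1/(i:ℝ)) * (((cnt x i : ℝ) + 1/2) / ((i:ℝ) + ((seen x i).card : ℝ)/2 - 1))

/-!
Compare `ρ_A` and `ξ` factor by factor. At a first occurrence the factor of `ρ_A` is
`(1/2)/(i + |A|/2 - 1) ≤ 1/i`, which is at most `|X|` times the factor `1/(i(|X| - |U|))` of `ξ`.
At a repeat, `|U(x_{<i})| ≤ |A|` makes the Dirichlet factor of `ξ` the larger one, so the factors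
differ at most by the escape weight `1 - 1/i`, i.e. by a ratio `i/(i-1)`. There are at most `|A|`
first occurrences, and the ratios `i/(i-1)` over the repeats are bounded by the telescoping product
`∏_{i=2}^n i/(i-1) = n`. Hence `ρ_A(x_{1:n}) ≤ n |X|^{|A|} ξ(x_{1:n})`.
-/

theorem forall_mem_Icc_one_of_mem_Icc {P : ℕ → Prop} {i n : ℕ} (h : ∀ j ∈ Icc 1 n, P j)
    (hi : i ∈ Icc 1 n) : ∀ j ∈ Icc 1 i, P j :=
  fun j hj => h j (Icc_subset_Icc_right (mem_Icc.1 hi).2 hj)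

section Counts

variable {σ : Type*} [DecidableEq σ] {x : ℕ → σ} {i : ℕ}

theorem cnt_eq_zero_iff : cnt x i = 0 ↔ x i ∉ seen x i := by
  simp only [cnt, seen, card_eq_zero, filter_eq_empty_iff, mem_image, not_exists, not_and]

theorem two_le_of_cnt_ne_zero (h : cnt x i ≠ 0) : 2 ≤ i := by
  by_contra! hi
  exact h (card_eq_zero.2 (filter_eq_empty_iff.2 fun j hj => by simp at hj; omega))

theorem seen_subset {B : Finset σ} (hx : ∀ j ∈ Icc 1 i, x j ∈ B) : seen x i ⊆ B :=
  image_subset_iff.2 fun j hj => hx j (Ico_subset_Icc_self hj)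

theorem card_seen_lt_of_cnt_eq_zero {B : Finset σ} (hi : 1 ≤ i)
    (hx : ∀ j ∈ Icc 1 i, x j ∈ B) (h : cnt x i = 0) : (seen x i).card < B.card :=
  card_lt_card <| (ssubset_iff_of_subset (seen_subset hx)).2
    ⟨x i, hx i (right_mem_Icc.2 hi), cnt_eq_zero_iff.1 h⟩

theorem injOn_of_cnt_eq_zero : Set.InjOn x {i | 1 ≤ i ∧ cnt x i = 0} := by
  have key : ∀ i j, 1 ≤ i → i < j → cnt x j = 0 → x i ≠ x j := fun i j hi hij hj he =>
    (card_pos.2 ⟨i, mem_filter.2 ⟨mem_Ico.2 ⟨hi, hij⟩, he⟩⟩).ne' hj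
  intro i ⟨hi, hci⟩ j ⟨hj, hcj⟩ he
  rcases lt_trichotomy i j with h | h | h
  · exact absurd he (key i j hi h hcj)
  · exact h
  · exact absurd he.symm (key j i hj h hci)

theorem card_filter_cnt_eq_zero_le {A : Finset σ} {n : ℕ} (hx : ∀ i ∈ Icc 1 n, x i ∈ A) :
    ((Icc 1 n).filter fun i => cnt x i = 0).card ≤ A.card :=
  card_le_card_of_injOn x (fun i hi => hx i (mem_filter.1 hi).1) <|
    injOn_of_cnt_eq_zero.mono fun i hi =>
      show 1 ≤ i ∧ cnt x i = 0 from ⟨(mem_Icc.1 (mem_filter.1 hi).1).1, (mem_filter.1 hi).2⟩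

end Counts

theorem prod_Icc_two_div_sub_one {n : ℕ} (hn : 1 ≤ n) :
    ∏ i ∈ Icc 2 n, (i : ℝ) / (i - 1) = n := by
  induction n, hn using Nat.le_induction with
  | base => simp
  | succ m hm ih =>
    have hm0 : (m : ℝ) ≠ 0 := by positivity
    rw [prod_Icc_succ_top (by omega), ih]
    push_cast
    rw [add_sub_cancel_right]
    field_simp

theorem prod_div_sub_one_le {s : Finset ℕ} {n : ℕ} (hn : 1 ≤ n) (hs : s ⊆ Icc 2 n) :
    ∏ i ∈ s, (i : ℝ) / (i - 1) ≤ n := by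
  have two_le : ∀ i ∈ Icc 2 n, (2 : ℝ) ≤ i := fun i hi => by exact_mod_cast (mem_Icc.1 hi).1
  rw [← prod_Icc_two_div_sub_one hn]
  refine prod_le_prod_of_subset_of_one_le hs (fun i hi => ?_) fun i hi _ => ?_
  · have := two_le i (hs hi)
    exact div_nonneg (by linarith) (by linarith)
  · have := two_le i hi
    rw [le_div_iff₀ (by linarith)]
    linarith

theorem kt_first_le (i a s X : ℝ) (hi : 1 ≤ i) (ha : 1 ≤ a) (hs : 0 ≤ s)
    (hsX : s + 1 ≤ X) :
    1 / 2 / (i + a / 2 - 1) ≤ X * (1 / i * (1 / (X - s))) := by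
  have hXs : 0 < X - s := by linarith
  calc 1 / 2 / (i + a / 2 - 1) ≤ 1 / i := by
        rw [div_le_div_iff₀ (by linarith) (by linarith)]
        linarith
    _ ≤ 1 / i * (X / (X - s)) :=
        le_mul_of_one_le_right (by positivity) ((one_le_div hXs).2 (by linarith))
    _ = X * (1 / i * (1 / (X - s))) := by ring

theorem kt_repeat_le (i a s c : ℝ) (hi : 2 ≤ i) (hs : 0 ≤ s) (hsa : s ≤ a) (hc : 0 ≤ c) :
    (c + 1 / 2) / (i + a / 2 - 1) ≤
      i / (i - 1) * ((1 - 1 / i) * ((c + 1 / 2) / (i + s / 2 - 1))) := by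
  have escape : i / (i - 1) * (1 - 1 / i) = 1 := by
    field_simp [show i - 1 ≠ 0 by linarith]
  rw [← mul_assoc, escape, one_mul]
  gcongr
  linarith

section Factors

variable {σ : Type*} [DecidableEq σ]

noncomputable def rhoFactor (A : Finset σ) (x : ℕ → σ) (i : ℕ) : ℝ :=
  ((cnt x i : ℝ) + 1/2) / ((i : ℝ) + (A.card : ℝ)/2 - 1)

noncomputable def xiFactor (Xs : Finset σ) (x : ℕ → σ) (i : ℕ) : ℝ :=
  if cnt x i = 0 then
    (1/(i:ℝ)) * (1/((Xs.card : ℝ) - ((seen x i).card : ℝ)))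
  else
    (1 - 1/(i:ℝ)) * (((cnt x i : ℝ) + 1/2) / ((i:ℝ) + ((seen x i).card : ℝ)/2 - 1))

noncomputable def ratioBound (Xs : Finset σ) (x : ℕ → σ) (i : ℕ) : ℝ :=
  if cnt x i = 0 then Xs.card else (i : ℝ) / (i - 1)

theorem rho_eq_prod_rhoFactor (A : Finset σ) (x : ℕ → σ) (n : ℕ) :
    rho A x n = ∏ i ∈ Icc 1 n, rhoFactor A x i := rfl

theorem xi_eq_prod_xiFactor (Xs : Finset σ) (x : ℕ → σ) (n : ℕ) :
    xi Xs x n = ∏ i ∈ Icc 1 n, xiFactor Xs x i := rfl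

variable {Xs A : Finset σ} {x : ℕ → σ} {i n : ℕ}

theorem rhoFactor_pos (hA : A.Nonempty) (hi : 1 ≤ i) : 0 < rhoFactor A x i := by
  have : (1 : ℝ) ≤ A.card := by exact_mod_cast hA.card_pos
  have : (1 : ℝ) ≤ i := by exact_mod_cast hi
  unfold rhoFactor
  exact div_pos (by positivity) (by linarith)

theorem ratioBound_pos (hX : Xs.Nonempty) : 0 < ratioBound Xs x i := by
  unfold ratioBound
  split_ifs with h
  · exact_mod_cast hX.card_pos
  · have : (2 : ℝ) ≤ i := by exact_mod_cast two_le_of_cnt_ne_zero h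
    exact div_pos (by linarith) (by linarith)

theorem rhoFactor_le_ratioBound_mul_xiFactor (hA : A.Nonempty) (hAX : A ⊆ Xs) (hi : 1 ≤ i)
    (hx : ∀ j ∈ Icc 1 i, x j ∈ A) :
    rhoFactor A x i ≤ ratioBound Xs x i * xiFactor Xs x i := by
  have hi' : (1 : ℝ) ≤ i := by exact_mod_cast hi
  unfold rhoFactor ratioBound xiFactor
  split_ifs with h
  · have hsX : (seen x i).card + 1 ≤ Xs.card :=
      card_seen_lt_of_cnt_eq_zero hi (fun j hj => hAX (hx j hj)) h
    rw [h, Nat.cast_zero, zero_add]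
    exact kt_first_le _ _ _ _ hi' (by exact_mod_cast hA.card_pos) (by positivity)
      (by exact_mod_cast hsX)
  · exact kt_repeat_le _ _ _ _ (by exact_mod_cast two_le_of_cnt_ne_zero h) (by positivity)
      (by exact_mod_cast card_le_card (seen_subset hx)) (by positivity)

theorem rho_pos (hA : A.Nonempty) : 0 < rho A x n :=
  prod_pos fun _ hi => rhoFactor_pos hA (mem_Icc.1 hi).1

theorem xiFactor_pos (hA : A.Nonempty) (hAX : A ⊆ Xs) (hi : 1 ≤ i)
    (hx : ∀ j ∈ Icc 1 i, x j ∈ A) : 0 < xiFactor Xs x i :=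
  pos_of_mul_pos_right ((rhoFactor_pos hA hi).trans_le <|
      rhoFactor_le_ratioBound_mul_xiFactor hA hAX hi hx)
    (ratioBound_pos (hA.mono hAX)).le

theorem xi_pos (hA : A.Nonempty) (hAX : A ⊆ Xs) (hx : ∀ i ∈ Icc 1 n, x i ∈ A) :
    0 < xi Xs x n :=
  prod_pos fun _ hi =>
    xiFactor_pos hA hAX (mem_Icc.1 hi).1 (forall_mem_Icc_one_of_mem_Icc hx hi)

theorem rho_le_prod_ratioBound_mul_xi (hA : A.Nonempty) (hAX : A ⊆ Xs)
    (hx : ∀ i ∈ Icc 1 n, x i ∈ A) :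
    rho A x n ≤ (∏ i ∈ Icc 1 n, ratioBound Xs x i) * xi Xs x n := by
  rw [rho_eq_prod_rhoFactor, xi_eq_prod_xiFactor, ← prod_mul_distrib]
  exact prod_le_prod (fun _ hi => (rhoFactor_pos hA (mem_Icc.1 hi).1).le) fun i hi =>
    rhoFactor_le_ratioBound_mul_xiFactor hA hAX (mem_Icc.1 hi).1
      (forall_mem_Icc_one_of_mem_Icc hx hi)

theorem prod_ratioBound_le (hX : Xs.Nonempty) (hn : 1 ≤ n) (hx : ∀ i ∈ Icc 1 n, x i ∈ A) :
    ∏ i ∈ Icc 1 n, ratioBound Xs x i ≤ (Xs.card : ℝ) ^ A.card * n := by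
  rw [← prod_filter_mul_prod_filter_not (Icc 1 n) fun i => cnt x i = 0]
  have first : ∏ i ∈ (Icc 1 n).filter (fun i => cnt x i = 0), ratioBound Xs x i
      = (Xs.card : ℝ) ^ ((Icc 1 n).filter fun i => cnt x i = 0).card :=
    prod_eq_pow_card fun i hi => if_pos (mem_filter.1 hi).2
  have repeats : ∏ i ∈ (Icc 1 n).filter (fun i => ¬cnt x i = 0), ratioBound Xs x i
      = ∏ i ∈ (Icc 1 n).filter (fun i => ¬cnt x i = 0), (i : ℝ) / (i - 1) :=
    prod_congr rfl fun i hi => if_neg (mem_filter.1 hi).2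
  rw [first, repeats]
  have hX1 : (1 : ℝ) ≤ Xs.card := by exact_mod_cast hX.card_pos
  refine mul_le_mul (pow_le_pow_right₀ hX1 (card_filter_cnt_eq_zero_le hx)) ?_
    (prod_nonneg fun i hi => ?_) (by positivity)
  · refine prod_div_sub_one_le hn fun i hi => ?_
    obtain ⟨hi, hc⟩ := mem_filter.1 hi
    exact mem_Icc.2 ⟨two_le_of_cnt_ne_zero hc, (mem_Icc.1 hi).2⟩
  · have : (2 : ℝ) ≤ i := by exact_mod_cast two_le_of_cnt_ne_zero (mem_filter.1 hi).2
    exact div_nonneg (by linarith) (by linarith)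

end Factors

/-- Theorem 1 of the paper: for alphabets `A ⊆ X`, `n ≥ 1` and a sequence over `A`,
the negative log of the Sparse Sequential Dirichlet distribution is bounded by
`log₂ n + |A|·log₂ |X| - log₂ ρ_A(x₁..xₙ)`. -/
theorem sparse_dirichlet_redundancy {σ : Type*} [DecidableEq σ]
    (Xs A : Finset σ) (hA : A.Nonempty) (hAX : A ⊆ Xs)
    (n : ℕ) (hn : 1 ≤ n) (x : ℕ → σ) (hx : ∀ i ∈ Finset.Icc 1 n, x i ∈ A) :
    -Real.logb 2 (xi Xs x n) ≤
      Real.logb 2 (n : ℝ) + (A.card : ℝ) * Real.logb 2 (Xs.card : ℝ)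
        - Real.logb 2 (rho A x n) := by
  have hX : Xs.Nonempty := hA.mono hAX
  have hξ : 0 < xi Xs x n := xi_pos hA hAX hx
  have hbound : rho A x n ≤ n * ((Xs.card : ℝ) ^ A.card * xi Xs x n) :=
    calc rho A x n ≤ (∏ i ∈ Icc 1 n, ratioBound Xs x i) * xi Xs x n :=
          rho_le_prod_ratioBound_mul_xi hA hAX hx
      _ ≤ ((Xs.card : ℝ) ^ A.card * n) * xi Xs x n :=
          mul_le_mul_of_nonneg_right (prod_ratioBound_le hX hn hx) hξ.le
      _ = n * ((Xs.card : ℝ) ^ A.card * xi Xs x n) := by ring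
  have hlog := Real.logb_le_logb_of_le one_lt_two (rho_pos hA) hbound
  have : (0 : ℝ) < Xs.card := by exact_mod_cast hX.card_pos
  rw [Real.logb_mul (by positivity) (by positivity), Real.logb_mul (by positivity) hξ.ne',
    Real.logb_pow] at hlog
  linarith
end

section
/- Let A be a finite nonempty alphabet, let θ : A → [0,1] with Σ_{a∈A} θ(a) = 1, and let μ be the memoryless source μ(x_{1:n}) := ∏_{i=1}^n θ(x_i). Then for every n ≥ 1 and every x_{1:n} ∈ A^n, −log₂( ρ_A(x_{1:n}) / μ(x_{1:n}) ) ≤ ((|A| − 1)/2)·log₂ n + |A| − 1, where ρ_A is the Sequential Dirichlet estimator over A (with the convention that the left side is −∞ when μ(x_{1:n}) = 0). -/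
open Finset

open Real

/-!
By Gibbs' inequality, `μ(x_{1:n})` is at most the maximum-likelihood probability
`∏ₐ (mₐ / n) ^ mₐ`, where `mₐ` counts the occurrences of `a`; so it suffices to bound that
from above by `ρ_A · n^((|A|-1)/2) · 2^(|A|-1)`, which is done by induction on `n`. Appending a
symbol seen `t` times before multiplies `ρ_A` by `(t + 1/2) / (n + |A|/2)` and the other side by
`(t+1)^(t+1) / t^t · n^n / (n+1)^(n+1) · (n/(n+1))^((|A|-1)/2)`. The comparison of these factors
splits into `(t+1)^(t+1) ≤ e (t + 1/2) t^t`, `(n/(n+1))^(n+1/2) ≤ 1/e` and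
`(n/(n+1))^((|A|-2)/2) ≤ (n+1) / (n + |A|/2)`, all consequences of
`2x/(2+x) ≤ log (1+x) ≤ x(6+x)/(6+4x)` for `x ≥ 0`. The base case `n = 1` is `|A| ≤ 2^(|A|-1)`;
for `|A| = 1` both sides equal `1`.
-/

lemma log_one_add_le_pade {x : ℝ} (hx : 0 ≤ x) :
    log (1 + x) ≤ x * (6 + x) / (6 + 4 * x) := by
  let g : ℝ → ℝ := fun y => y * (6 + y) / (6 + 4 * y) - log (1 + y)
  have hg : ∀ y, 0 ≤ y → HasDerivAt g
      (((1 * (6 + y) + y * 1) * (6 + 4 * y) - y * (6 + y) * (4 * 1)) / (6 + 4 * y) ^ 2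
        - 1 / (1 + y)) y := by
    intro y hy
    have hpoly := ((hasDerivAt_id' y).mul ((hasDerivAt_id' y).const_add 6)).div
      (((hasDerivAt_id' y).const_mul 4).const_add 6) (by simp; positivity)
    have hlog := ((hasDerivAt_id' y).const_add 1).log (by simp; positivity)
    exact hpoly.sub hlog
  have hmono : MonotoneOn g (Set.Ici 0) := by
    refine monotoneOn_of_hasDerivWithinAt_nonneg (convex_Ici 0)
      (fun y hy => (hg y hy).continuousAt.continuousWithinAt)
      (fun y hy => (hg y (interior_subset hy)).hasDerivWithinAt) fun y hy => ?_
    have hy : 0 ≤ y := interior_subset hy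
    rw [sub_nonneg, div_le_div_iff₀ (by positivity) (by positivity)]
    nlinarith [pow_nonneg hy 3]
  simpa [g] using hmono Set.self_mem_Ici hx hx

lemma succ_mul_log_one_add_inv_le {t : ℝ} (ht : 1 ≤ t) :
    (t + 1) * log (1 + 1 / t) ≤ 1 + log (1 + 1 / (2 * t)) := by
  have ht0 : 0 < t := by linarith
  have hup := log_one_add_le_pade (one_div_nonneg.2 ht0.le)
  have hlow := le_log_one_add_of_nonneg (x := 1 / (2 * t)) (by positivity)
  rw [show 1 / t * (6 + 1 / t) / (6 + 4 * (1 / t)) = (6 * t + 1) / (t * (6 * t + 4)) by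
    field_simp] at hup
  rw [show 2 * (1 / (2 * t)) / (1 / (2 * t) + 2) = 2 / (4 * t + 1) by field_simp; ring] at hlow
  calc (t + 1) * log (1 + 1 / t) ≤ (t + 1) * ((6 * t + 1) / (t * (6 * t + 4))) := by gcongr
    _ ≤ 1 + 2 / (4 * t + 1) := by
      rw [mul_div_assoc', one_add_div (by positivity),
        div_le_div_iff₀ (by positivity) (by positivity)]
      nlinarith
    _ ≤ 1 + log (1 + 1 / (2 * t)) := by linarith

lemma succ_pow_succ_le_exp_one_mul (t : ℕ) :
    ((t : ℝ) + 1) ^ (t + 1) ≤ exp 1 * (t + 1 / 2) * (t : ℝ) ^ t := by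
  rcases Nat.eq_zero_or_pos t with rfl | ht
  · norm_num; linarith [exp_one_gt_d9]
  have ht1 : (1 : ℝ) ≤ t := by exact_mod_cast ht
  have ht0 : (0 : ℝ) < t := by linarith
  have hpow : (1 + 1 / (t : ℝ)) ^ (t + 1) ≤ exp 1 * (1 + 1 / (2 * t)) := by
    rw [← exp_log (by positivity : 0 < 1 + 1 / (2 * (t : ℝ))), ← exp_add,
      ← exp_log (by positivity : 0 < (1 + 1 / (t : ℝ)) ^ (t + 1)), log_pow, exp_le_exp]
    exact_mod_cast succ_mul_log_one_add_inv_le ht1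
  calc ((t : ℝ) + 1) ^ (t + 1) = (t : ℝ) ^ (t + 1) * (1 + 1 / t) ^ (t + 1) := by
        rw [← mul_pow]; field_simp
    _ ≤ (t : ℝ) ^ (t + 1) * (exp 1 * (1 + 1 / (2 * t))) := by gcongr
    _ = exp 1 * (t + 1 / 2) * (t : ℝ) ^ t := by field_simp; ring

lemma log_div_add_one {x : ℝ} (hx : 0 < x) : log (x / (x + 1)) = -log (1 + 1 / x) := by
  rw [← log_inv]; congr 1; field_simp

lemma div_add_one_rpow_le_exp_neg_one {x : ℝ} (hx : 0 < x) :
    (x / (x + 1)) ^ (x + 1 / 2) ≤ exp (-1) := by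
  rw [rpow_def_of_pos (by positivity), exp_le_exp, log_div_add_one hx]
  have h := le_log_one_add_of_nonneg (one_div_nonneg.2 hx.le)
  rw [show 2 * (1 / x) / (1 / x + 2) = 1 / (x + 1 / 2) by field_simp; ring,
    div_le_iff₀ (by positivity)] at h
  linarith

lemma div_add_one_rpow_le {x m : ℝ} (hx : 0 < x) (hm : 0 ≤ m) :
    (x / (x + 1)) ^ m ≤ (x + 1) / (x + 1 + m) := by
  rw [rpow_def_of_pos (by positivity), ← exp_log (by positivity : 0 < (x + 1) / (x + 1 + m)),
    exp_le_exp, log_div_add_one hx, ← inv_div (x + 1 + m), log_inv]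
  have h1 := le_log_one_add_of_nonneg (one_div_nonneg.2 hx.le)
  rw [show 2 * (1 / x) / (1 / x + 2) = 2 / (2 * x + 1) by field_simp; ring] at h1
  have h2 := log_le_sub_one_of_pos (show 0 < (x + 1 + m) / (x + 1) by positivity)
  rw [show (x + 1 + m) / (x + 1) - 1 = m / (x + 1) by field_simp; ring] at h2
  have h3 : m / (x + 1) ≤ m * (2 / (2 * x + 1)) := by
    rw [mul_div_assoc', div_le_div_iff₀ (by positivity) (by positivity)]; nlinarith
  nlinarith

lemma kt_ratio_le {k : ℝ} (hk : 2 ≤ k) (t : ℕ) {n : ℕ} (hn : 1 ≤ n) :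
    ((t : ℝ) + 1) ^ (t + 1) / (t : ℝ) ^ t * ((n : ℝ) ^ n / ((n : ℝ) + 1) ^ (n + 1)) *
        ((n : ℝ) / (n + 1)) ^ ((k - 1) / 2) ≤ (t + 1 / 2) / (n + k / 2) := by
  have hn0 : (0 : ℝ) < n := by exact_mod_cast hn
  set r := (n : ℝ) / (n + 1) with hr
  have hr0 : 0 < r := by positivity
  have ht : (0 : ℝ) < (t : ℝ) ^ t := by
    rcases Nat.eq_zero_or_pos t with rfl | ht
    · simp
    · positivity
  have hsplit : (n : ℝ) ^ n / ((n : ℝ) + 1) ^ (n + 1) * r ^ ((k - 1) / 2) =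
      r ^ ((n : ℝ) + 1 / 2) * r ^ ((k - 2) / 2) / (n + 1) := by
    rw [← rpow_add hr0, show (n : ℝ) + 1 / 2 + (k - 2) / 2 = n + (k - 1) / 2 by ring,
      rpow_add hr0, rpow_natCast, hr, div_pow, pow_succ]
    field_simp
  have hT := (div_le_iff₀ ht).2 (succ_pow_succ_le_exp_one_mul t)
  have hR := div_add_one_rpow_le_exp_neg_one hn0
  have hK := div_add_one_rpow_le hn0 (show 0 ≤ (k - 2) / 2 by linarith)
  calc ((t : ℝ) + 1) ^ (t + 1) / (t : ℝ) ^ t * ((n : ℝ) ^ n / ((n : ℝ) + 1) ^ (n + 1)) *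
        r ^ ((k - 1) / 2)
      = ((t : ℝ) + 1) ^ (t + 1) / (t : ℝ) ^ t * (r ^ ((n : ℝ) + 1 / 2) * r ^ ((k - 2) / 2)) /
          (n + 1) := by rw [mul_assoc, hsplit]; ring
    _ ≤ exp 1 * (t + 1 / 2) * (exp (-1) * ((n + 1) / (n + 1 + (k - 2) / 2))) / (n + 1) := by
      gcongr
    _ = (t + 1 / 2) / (n + k / 2) := by
      rw [show exp 1 * (t + 1 / 2) * (exp (-1) * ((n + 1) / (n + 1 + (k - 2) / 2))) =
        exp 1 * exp (-1) * ((t + 1 / 2) * ((n + 1) / (n + 1 + (k - 2) / 2))) by ring,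
        ← exp_add, add_neg_cancel, exp_zero, one_mul]
      rw [show (n : ℝ) + 1 + (k - 2) / 2 = n + k / 2 by ring]
      field_simp

theorem prod_pow_le_prod_pow_self_div {ι : Type*} (s : Finset ι) (θ : ι → ℝ) (m : ι → ℕ)
    (hθ : ∀ i ∈ s, 0 ≤ θ i) (hθ1 : ∑ i ∈ s, θ i ≤ 1) :
    ∏ i ∈ s, θ i ^ m i ≤
      (∏ i ∈ s, (m i : ℝ) ^ m i) / ((∑ i ∈ s, m i : ℕ) : ℝ) ^ (∑ i ∈ s, m i) := by
  set N := ∑ i ∈ s, m i with hN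
  rcases Nat.eq_zero_or_pos N with hN0 | hN0
  · have hm : ∀ i ∈ s, m i = 0 := sum_eq_zero_iff.1 hN0
    simp only [hN0, Nat.cast_zero, pow_zero, div_one]
    exact (prod_congr rfl fun i hi => by simp [hm i hi]).le
  have hNR : (0 : ℝ) < N := by exact_mod_cast hN0
  let w : ι → ℝ := fun i => m i / N
  -- `z i` is junk where `m i = 0`, but it carries weight `0` there.
  let z : ι → ℝ := fun i => θ i * N / m i
  have hw : ∑ i ∈ s, w i = 1 := by
    rw [← sum_div, div_eq_one_iff_eq hNR.ne', hN, Nat.cast_sum]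
  have hz : ∀ i ∈ s, 0 ≤ z i := fun i hi => by have := hθ i hi; positivity
  have hamgm : ∏ i ∈ s, z i ^ w i ≤ 1 := by
    refine (geom_mean_le_arith_mean_weighted s w z (fun i _ => by positivity) hw hz).trans
      (le_trans (sum_le_sum fun i hi => ?_) hθ1)
    rcases eq_or_ne (m i : ℝ) 0 with h | h
    · simp [w, h, hθ i hi]
    · exact (by simp only [w, z]; field_simp : w i * z i = θ i).le
  have hprod : ∏ i ∈ s, z i ^ m i ≤ 1 := by
    calc ∏ i ∈ s, z i ^ m i = (∏ i ∈ s, z i ^ w i) ^ (N : ℝ) := by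
          rw [← finsetProd_rpow _ _ (fun i hi => rpow_nonneg (hz i hi) _)]
          refine prod_congr rfl fun i hi => ?_
          rw [← rpow_mul (hz i hi), div_mul_cancel₀ _ hNR.ne', rpow_natCast]
      _ ≤ 1 := rpow_le_one (prod_nonneg fun i hi => rpow_nonneg (hz i hi) _) hamgm hNR.le
  have hfactor : (∏ i ∈ s, θ i ^ m i) * (N : ℝ) ^ N =
      (∏ i ∈ s, z i ^ m i) * ∏ i ∈ s, (m i : ℝ) ^ m i := by
    rw [show (N : ℝ) ^ N = ∏ i ∈ s, (N : ℝ) ^ m i from (prod_pow_eq_pow_sum s m _).symm,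
      ← prod_mul_distrib, ← prod_mul_distrib]
    refine prod_congr rfl fun i _ => ?_
    rcases eq_or_ne (m i) 0 with h | h
    · simp [h]
    · have : (m i : ℝ) ≠ 0 := by exact_mod_cast h
      rw [← mul_pow, ← mul_pow]
      simp only [z]
      field_simp
  rw [le_div_iff₀ (by positivity), hfactor]
  exact mul_le_of_le_one_left (prod_nonneg fun i _ => by positivity) hprod

lemma two_pow_neg_le_inv_card {k : ℕ} (hk : 1 ≤ k) : (2 : ℝ) ^ (-((k : ℝ) - 1)) ≤ 1 / k := by
  have hk' : k ≤ 2 ^ (k - 1) := by have := Nat.lt_two_pow_self (n := k - 1); omega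
  rw [← Nat.cast_pred hk, rpow_neg zero_le_two, rpow_natCast, one_div]
  exact inv_anti₀ (by positivity) (by exact_mod_cast hk')

section Counts

variable {σ : Type*} [DecidableEq σ]

def occ (x : ℕ → σ) (a : σ) (n : ℕ) : ℕ := #{i ∈ Icc 1 n | x i = a}

lemma cnt_succ (x : ℕ → σ) (n : ℕ) : cnt x (n + 1) = occ x (x (n + 1)) n := by
  rw [cnt, occ, Ico_add_one_right_eq_Icc]

lemma occ_succ (x : ℕ → σ) (a : σ) (n : ℕ) :
    occ x a (n + 1) = occ x a n + if x (n + 1) = a then 1 else 0 := by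
  simp only [occ, card_filter]
  exact sum_Icc_succ_top (by omega) _

lemma sum_occ {A : Finset σ} {x : ℕ → σ} {n : ℕ} (hx : ∀ i ∈ Icc 1 n, x i ∈ A) :
    ∑ a ∈ A, occ x a n = n := by
  simp only [occ]
  rw [← card_eq_sum_card_fiberwise hx, Nat.card_Icc, Nat.add_sub_cancel]

lemma prod_comp_eq_prod_pow_occ {M : Type*} [CommMonoid M] {A : Finset σ} {x : ℕ → σ} {n : ℕ}
    (hx : ∀ i ∈ Icc 1 n, x i ∈ A) (f : σ → M) :
    ∏ i ∈ Icc 1 n, f (x i) = ∏ a ∈ A, f a ^ occ x a n := by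
  rw [← prod_fiberwise_of_maps_to hx]
  refine prod_congr rfl fun a _ => ?_
  rw [occ, ← prod_const]
  exact prod_congr rfl fun i hi => by rw [(mem_filter.1 hi).2]

lemma rho_succ (A : Finset σ) (x : ℕ → σ) (n : ℕ) :
    rho A x (n + 1) = rho A x n * ((occ x (x (n + 1)) n + 1 / 2) / (n + #A / 2)) := by
  rw [rho, rho, prod_Icc_succ_top (by omega), cnt_succ]
  congr 2
  push_cast
  ring

lemma rho_nonneg (A : Finset σ) (x : ℕ → σ) (n : ℕ) : 0 ≤ rho A x n := by
  refine prod_nonneg fun i hi => div_nonneg (by positivity) ?_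
  have : (1 : ℝ) ≤ i := by exact_mod_cast (mem_Icc.1 hi).1
  have : (0 : ℝ) ≤ #A / 2 := by positivity
  linarith

lemma rho_singleton {a : σ} {x : ℕ → σ} {n : ℕ} (hx : ∀ i ∈ Icc 1 n, x i = a) :
    rho {a} x n = 1 := by
  induction n with
  | zero => simp [rho]
  | succ n ih =>
    have hxn : ∀ i ∈ Icc 1 n, x i = a := fun i hi =>
      hx i (Icc_subset_Icc_right n.le_succ hi)
    have hocc : occ x a n = n := by
      rw [occ, filter_true_of_mem hxn, Nat.card_Icc, Nat.add_sub_cancel]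
    rw [rho_succ, ih hxn, hx (n + 1) (by simp), hocc, card_singleton, one_mul]
    push_cast
    exact div_self (by positivity)

/-- The largest probability `max_θ ∏ᵢ θ (x i) = ∏ₐ (mₐ / n) ^ mₐ` that a memoryless source
assigns to `x 1, …, x n`. -/
noncomputable def mlProb (A : Finset σ) (x : ℕ → σ) (n : ℕ) : ℝ :=
  (∏ a ∈ A, (occ x a n : ℝ) ^ occ x a n) / (n : ℝ) ^ n

lemma prod_le_mlProb {A : Finset σ} {θ : σ → ℝ} (hθ : ∀ a ∈ A, 0 ≤ θ a)
    (hsum : ∑ a ∈ A, θ a = 1) {x : ℕ → σ} {n : ℕ} (hx : ∀ i ∈ Icc 1 n, x i ∈ A) :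
    ∏ i ∈ Icc 1 n, θ (x i) ≤ mlProb A x n := by
  have h := prod_pow_le_prod_pow_self_div A θ (fun a => occ x a n) hθ hsum.le
  rwa [sum_occ hx, ← prod_comp_eq_prod_pow_occ hx] at h

lemma mlProb_one {A : Finset σ} (x : ℕ → σ) : mlProb A x 1 = 1 := by
  rw [mlProb, Nat.cast_one, one_pow, div_one]
  refine prod_eq_one fun a _ => ?_
  have : occ x a 1 ≤ 1 := (card_filter_le _ _).trans (by simp)
  interval_cases occ x a 1 <;> simp

lemma mlProb_succ {A : Finset σ} {x : ℕ → σ} {n : ℕ} (hb : x (n + 1) ∈ A) :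
    mlProb A x (n + 1) = mlProb A x n *
      (((occ x (x (n + 1)) n : ℝ) + 1) ^ (occ x (x (n + 1)) n + 1) /
          (occ x (x (n + 1)) n : ℝ) ^ occ x (x (n + 1)) n *
        ((n : ℝ) ^ n / ((n : ℝ) + 1) ^ (n + 1))) := by
  have ht : (0 : ℝ) < (occ x (x (n + 1)) n : ℝ) ^ occ x (x (n + 1)) n := by
    rcases Nat.eq_zero_or_pos (occ x (x (n + 1)) n) with h | h
    · simp [h]
    · positivity
  have hrest : ∏ a ∈ A.erase (x (n + 1)), (occ x a (n + 1) : ℝ) ^ occ x a (n + 1) =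
      ∏ a ∈ A.erase (x (n + 1)), (occ x a n : ℝ) ^ occ x a n :=
    prod_congr rfl fun a ha => by rw [occ_succ, if_neg (ne_of_mem_erase ha).symm, add_zero]
  rw [mlProb, mlProb, ← mul_prod_erase A _ hb, ← mul_prod_erase A _ hb, hrest, occ_succ,
    if_pos rfl]
  push_cast
  field_simp

lemma mlProb_mul_rpow_le_rho {A : Finset σ} (hA : 2 ≤ #A)
    {x : ℕ → σ} {n : ℕ} (hn : 1 ≤ n) (hx : ∀ i ∈ Icc 1 n, x i ∈ A) :
    mlProb A x n * (n : ℝ) ^ (-(((#A : ℝ) - 1) / 2)) * (2 : ℝ) ^ (-((#A : ℝ) - 1)) ≤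
      rho A x n := by
  induction n, hn using Nat.le_induction with
  | base =>
    have hρ : rho A x 1 = 1 / #A := by
      rw [rho_succ]
      simp [rho, occ]
      field_simp
    rw [mlProb_one, hρ, Nat.cast_one, one_rpow, one_mul, one_mul]
    exact two_pow_neg_le_inv_card (by omega)
  | succ n hn ih =>
    have hb : x (n + 1) ∈ A := hx (n + 1) (by simp)
    have hn0 : (0 : ℝ) < n := by exact_mod_cast hn
    set c := ((#A : ℝ) - 1) / 2
    have hpow : ((n + 1 : ℕ) : ℝ) ^ (-c) = (n : ℝ) ^ (-c) * ((n : ℝ) / (n + 1)) ^ c := by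
      rw [div_rpow hn0.le (by positivity), rpow_neg hn0.le, rpow_neg (by positivity)]
      push_cast
      field_simp
    have hratio := kt_ratio_le (k := #A) (by exact_mod_cast hA) (occ x (x (n + 1)) n) hn
    calc mlProb A x (n + 1) * ((n + 1 : ℕ) : ℝ) ^ (-c) * (2 : ℝ) ^ (-((#A : ℝ) - 1))
        = mlProb A x n * (n : ℝ) ^ (-c) * (2 : ℝ) ^ (-((#A : ℝ) - 1)) *
            (((occ x (x (n + 1)) n : ℝ) + 1) ^ (occ x (x (n + 1)) n + 1) /
              (occ x (x (n + 1)) n : ℝ) ^ occ x (x (n + 1)) n *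
              ((n : ℝ) ^ n / ((n : ℝ) + 1) ^ (n + 1)) * ((n : ℝ) / (n + 1)) ^ c) := by
          rw [mlProb_succ hb, hpow]; ring
      _ ≤ rho A x n * ((occ x (x (n + 1)) n + 1 / 2) / (n + #A / 2)) := by
          gcongr
          · exact rho_nonneg A x n
          · exact ih fun i hi => hx i (Icc_subset_Icc_right n.le_succ hi)
      _ = rho A x (n + 1) := (rho_succ A x n).symm

end Counts

theorem kt_redundancy_bound_general {σ : Type*} [DecidableEq σ]
    (A : Finset σ) (hA : A.Nonempty) (θ : σ → ℝ)
    (hθ0 : ∀ a ∈ A, 0 ≤ θ a)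
    (hsum : ∑ a ∈ A, θ a = 1)
    (n : ℕ) (hn : 1 ≤ n) (x : ℕ → σ) (hx : ∀ i ∈ Finset.Icc 1 n, x i ∈ A) :
    rho A x n ≥
      (∏ i ∈ Finset.Icc 1 n, θ (x i)) *
        (n : ℝ) ^ (-(((A.card : ℝ) - 1) / 2)) *
        (2 : ℝ) ^ (-((A.card : ℝ) - 1)) := by
  obtain hA1 | hA2 : #A = 1 ∨ 2 ≤ #A := by have := hA.card_pos; omega
  · obtain ⟨a, rfl⟩ := card_eq_one.1 hA1
    have hxa : ∀ i ∈ Icc 1 n, x i = a := fun i hi => mem_singleton.1 (hx i hi)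
    have hθa : θ a = 1 := by simpa using hsum
    have hμ : ∏ i ∈ Icc 1 n, θ (x i) = 1 := prod_eq_one fun i hi => by rw [hxa i hi, hθa]
    simp [rho_singleton hxa, hμ]
  · calc (∏ i ∈ Icc 1 n, θ (x i)) * (n : ℝ) ^ (-(((#A : ℝ) - 1) / 2)) *
          (2 : ℝ) ^ (-((#A : ℝ) - 1))
        ≤ mlProb A x n * (n : ℝ) ^ (-(((#A : ℝ) - 1) / 2)) * (2 : ℝ) ^ (-((#A : ℝ) - 1)) := by
          gcongr
          exact prod_le_mlProb hθ0 hsum hx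
      _ ≤ rho A x n := mlProb_mul_rpow_le_rho hA2 hn hx

/-- The Krichevsky–Trofimov redundancy bound for the Sequential Dirichlet estimator,
in the equivalent product form: for any memoryless source `μ(x₁..xₙ) = ∏ᵢ θ(xᵢ)` over `A`,
`ρ_A(x₁..xₙ) ≥ μ(x₁..xₙ) · n^(-(|A|-1)/2) · 2^(-(|A|-1))`, i.e.
`-log₂(ρ_A/μ) ≤ ((|A|-1)/2)·log₂ n + |A| - 1`. -/
theorem kt_redundancy_bound {σ : Type*} [DecidableEq σ]
    (A : Finset σ) (hA : A.Nonempty) (θ : σ → ℝ)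
    (hθ0 : ∀ a ∈ A, 0 ≤ θ a) (hθ1 : ∀ a ∈ A, θ a ≤ 1)
    (hsum : ∑ a ∈ A, θ a = 1)
    (n : ℕ) (hn : 1 ≤ n) (x : ℕ → σ) (hx : ∀ i ∈ Finset.Icc 1 n, x i ∈ A) :
    rho A x n ≥
      (∏ i ∈ Finset.Icc 1 n, θ (x i)) *
        (n : ℝ) ^ (-(((A.card : ℝ) - 1) / 2)) *
        (2 : ℝ) ^ (-((A.card : ℝ) - 1)) :=
  kt_redundancy_bound_general A hA θ hθ0 hsum n hn x hx
end
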